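/- In the classical (commuting) setting, a learning algorithm N (a family of CP-TP instruments acting on commuting input states {ρ_s}) that does not admit a reconstruction map Γ with Γ∘N(ρ_s) = ρ_s for all s is not information-theoretically admissible: there exists a strictly more informative algorithm N'. Concretely, diagonalizing all ρ_s in a common basis {|x⟩} and setting N'_w(|x⟩⟨x|) := |x⟩⟨x| ⊗ N_w(|x⟩⟨x|) produces an algorithm from which N can be simulated by partial trace, but from which the input ρ_s is fully recoverable, contradicting simulability of N' from N. -/

import Mathlib

open Matrix
open scoped ComplexOrder

/-- `ρ` is a density operator. -/
def IsDensity {d : Type*} [Fintype d] (ρ : Matrix d d ℂ) : Prop :=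
  ρ.PosSemidef ∧ Matrix.trace ρ = 1

/-- The blockwise action `id_{k} ⊗ Φ` of a linear map on matrices on `k × k` block
matrices. -/
def blockApply {A B : Type*} [Fintype A] [Fintype B]
    (Φ : Matrix A A ℂ →ₗ[ℂ] Matrix B B ℂ) (k : ℕ)
    (M : Matrix (Fin k × A) (Fin k × A) ℂ) : Matrix (Fin k × B) (Fin k × B) ℂ :=
  fun p q => Φ (Matrix.of fun a b => M (p.1, a) (q.1, b)) p.2 q.2

/-- Complete positivity of a linear map on matrices. -/
def IsCPMap {A B : Type*} [Fintype A] [Fintype B]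
    (Φ : Matrix A A ℂ →ₗ[ℂ] Matrix B B ℂ) : Prop :=
  ∀ (k : ℕ) (M : Matrix (Fin k × A) (Fin k × A) ℂ), M.PosSemidef →
    (blockApply Φ k M).PosSemidef

/-- Trace preservation of a linear map on matrices. -/
def IsTPMap {A B : Type*} [Fintype A] [Fintype B]
    (Φ : Matrix A A ℂ →ₗ[ℂ] Matrix B B ℂ) : Prop :=
  ∀ M, Matrix.trace (Φ M) = Matrix.trace M

/-- The total classical–quantum output `Σ_w N_w(M) ⊗ |w⟩⟨w|` of the instrument `{N_w}`. -/
def cqOut {A B W : Type*} [Fintype A] [Fintype B] [DecidableEq W]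
    (N : W → (Matrix A A ℂ →ₗ[ℂ] Matrix B B ℂ)) (M : Matrix A A ℂ) :
    Matrix (W × B) (W × B) ℂ :=
  fun p q => if p.1 = q.1 then N p.1 M p.2 q.2 else 0

/-- `N'` is more informative than `N` with respect to the input states `{ρ_s}`: there is a
family of CP-TP simulation maps `{Γ_w}` with `Γ_w ∘ N'_w(ρ_s) = N_w(ρ_s)` for all `s, w`. -/
def MoreInformative {S W A B' B : Type*} [Fintype A] [Fintype B'] [Fintype B]
    (ρ : S → Matrix A A ℂ)
    (N' : W → (Matrix A A ℂ →ₗ[ℂ] Matrix B' B' ℂ))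
    (N : W → (Matrix A A ℂ →ₗ[ℂ] Matrix B B ℂ)) : Prop :=
  ∃ Γ : W → (Matrix B' B' ℂ →ₗ[ℂ] Matrix B B ℂ),
    (∀ w, IsCPMap (Γ w) ∧ IsTPMap (Γ w)) ∧ ∀ s w, Γ w (N' w (ρ s)) = N w (ρ s)

/-! ### Auxiliary lemmas -/

section Aux

lemma aux_psd_sum {n ι : Type*} [Fintype n] (s : Finset ι) (f : ι → Matrix n n ℂ)
    (h : ∀ i ∈ s, (f i).PosSemidef) : (∑ i ∈ s, f i).PosSemidef := by
  classical
  induction s using Finset.induction_on with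
  | empty => simpa using Matrix.PosSemidef.zero
  | @insert a s hx ih =>
      rw [Finset.sum_insert hx]
      exact (h _ (Finset.mem_insert_self _ _)).add
        (ih fun i hi => h i (Finset.mem_insert_of_mem hi))

/-- Conjugation by a fixed Kraus operator, as a linear map. -/
noncomputable def krausMap {A B' : Type*} [Fintype A] [Fintype B'] (K : Matrix B' A ℂ) :
    Matrix A A ℂ →ₗ[ℂ] Matrix B' B' ℂ where
  toFun M := K * M * Kᴴ
  map_add' M N := by simp only [Matrix.mul_add, Matrix.add_mul]
  map_smul' c M := by simp [Matrix.mul_smul, Matrix.smul_mul]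

lemma krausMap_apply {A B' : Type*} [Fintype A] [Fintype B'] (K : Matrix B' A ℂ)
    (M : Matrix A A ℂ) : krausMap K M = K * M * Kᴴ := rfl

lemma blockApply_sum {A B ι : Type*} [Fintype A] [Fintype B] (s : Finset ι)
    (Φ : ι → (Matrix A A ℂ →ₗ[ℂ] Matrix B B ℂ)) (k : ℕ)
    (M : Matrix (Fin k × A) (Fin k × A) ℂ) :
    blockApply (∑ i ∈ s, Φ i) k M = ∑ i ∈ s, blockApply (Φ i) k M := by
  ext p q
  simp [blockApply, LinearMap.sum_apply, Matrix.sum_apply]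

lemma blockApply_comp {A B C : Type*} [Fintype A] [Fintype B] [Fintype C]
    (Φ : Matrix B B ℂ →ₗ[ℂ] Matrix C C ℂ) (Ψ : Matrix A A ℂ →ₗ[ℂ] Matrix B B ℂ) (k : ℕ)
    (M : Matrix (Fin k × A) (Fin k × A) ℂ) :
    blockApply (Φ ∘ₗ Ψ) k M = blockApply Φ k (blockApply Ψ k M) := rfl

lemma isCPMap_comp {A B C : Type*} [Fintype A] [Fintype B] [Fintype C]
    {Φ : Matrix B B ℂ →ₗ[ℂ] Matrix C C ℂ} {Ψ : Matrix A A ℂ →ₗ[ℂ] Matrix B B ℂ}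
    (hΦ : IsCPMap Φ) (hΨ : IsCPMap Ψ) : IsCPMap (Φ ∘ₗ Ψ) := by
  intro k M hM
  rw [blockApply_comp]
  exact hΦ k _ (hΨ k M hM)

lemma isCPMap_sum {A B ι : Type*} [Fintype A] [Fintype B] (s : Finset ι)
    (Φ : ι → (Matrix A A ℂ →ₗ[ℂ] Matrix B B ℂ)) (h : ∀ i ∈ s, IsCPMap (Φ i)) :
    IsCPMap (∑ i ∈ s, Φ i) := by
  intro k M hM
  rw [blockApply_sum]
  exact aux_psd_sum _ _ fun i hi => h i hi k M hM

/-- blockApply of a Kraus conjugation is a Kraus conjugation. -/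
lemma blockApply_kraus {A B' : Type*} [Fintype A] [Fintype B'] [DecidableEq A]
    (K : Matrix B' A ℂ) (k : ℕ) (M : Matrix (Fin k × A) (Fin k × A) ℂ) :
    blockApply (krausMap K) k M =
      (Matrix.of fun (p : Fin k × B') (q : Fin k × A) =>
        if p.1 = q.1 then K p.2 q.2 else 0) * M *
      (Matrix.of fun (p : Fin k × B') (q : Fin k × A) =>
        if p.1 = q.1 then K p.2 q.2 else 0)ᴴ := by
  ext p q
  simp only [blockApply, krausMap, LinearMap.coe_mk, AddHom.coe_mk, Matrix.mul_apply,
    Matrix.conjTranspose_apply, Matrix.of_apply, Fintype.sum_prod_type]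
  simp only [ite_mul, mul_ite, zero_mul, mul_zero, apply_ite (star : ℂ → ℂ), star_zero,
    Finset.sum_ite_eq, Finset.sum_ite_eq', Finset.mem_univ, if_true]
  rw [Finset.sum_comm]
  simp only [Finset.sum_ite_eq, Finset.sum_ite_eq', Finset.mem_univ, if_true, Finset.sum_mul]
  refine Finset.sum_congr rfl fun x _ => ?_
  rw [Finset.sum_comm]
  simp [ite_mul, zero_mul, Finset.sum_ite_eq', Finset.sum_ite_eq]

lemma isCPMap_krausMap {A B' : Type*} [Fintype A] [Fintype B'] [DecidableEq A]
    (K : Matrix B' A ℂ) : IsCPMap (krausMap K) := by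
  intro k M hM
  rw [blockApply_kraus]
  exact hM.mul_mul_conjTranspose_same _

lemma isCPMap_apply_posSemidef {A B : Type*} [Fintype A] [Fintype B]
    {Φ : Matrix A A ℂ →ₗ[ℂ] Matrix B B ℂ} (hΦ : IsCPMap Φ)
    {σ : Matrix A A ℂ} (hσ : σ.PosSemidef) : (Φ σ).PosSemidef := by
  have h2 := hΦ 1 (σ.submatrix Prod.snd Prod.snd) (hσ.submatrix _)
  have h3 := h2.submatrix (fun b : B => ((0 : Fin 1), b))
  have h4 : (blockApply Φ 1 (σ.submatrix Prod.snd Prod.snd)).submatrix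
      (fun b : B => ((0 : Fin 1), b)) (fun b : B => ((0 : Fin 1), b)) = Φ σ := by
    ext b b'
    simp only [Matrix.submatrix_apply, blockApply]
    congr 1
  rwa [h4] at h3

end Aux

section PtrMaps

variable {A B W : Type*} [Fintype A] [Fintype B] [Fintype W]
  [DecidableEq A] [DecidableEq B] [DecidableEq W]

/-- Partial trace over the first tensor factor. -/
noncomputable def ptrFst : Matrix (A × B) (A × B) ℂ →ₗ[ℂ] Matrix B B ℂ :=
  ∑ a : A, krausMap (Matrix.of fun (b : B) (p : A × B) => if p = (a, b) then 1 else 0)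

/-- Partial trace over the second tensor factor. -/
noncomputable def ptrSnd : Matrix (A × B) (A × B) ℂ →ₗ[ℂ] Matrix A A ℂ :=
  ∑ b : B, krausMap (Matrix.of fun (a : A) (p : A × B) => if p = (a, b) then 1 else 0)

/-- Extraction of the `w`-th diagonal block. -/
noncomputable def blockExtract (w : W) : Matrix (W × B) (W × B) ℂ →ₗ[ℂ] Matrix B B ℂ :=
  krausMap (Matrix.of fun (b : B) (p : W × B) => if p = (w, b) then 1 else 0)

lemma ptrFst_apply (M : Matrix (A × B) (A × B) ℂ) (b b' : B) :
    ptrFst M b b' = ∑ a : A, M (a, b) (a, b') := by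
  simp only [ptrFst, LinearMap.sum_apply, Matrix.sum_apply, krausMap_apply, Matrix.mul_apply,
    Matrix.conjTranspose_apply, Matrix.of_apply, ite_mul, one_mul, zero_mul,
    Finset.sum_ite_eq', Finset.mem_univ, if_true]
  simp [apply_ite (star : ℂ → ℂ), mul_ite, Finset.sum_ite_eq', Finset.sum_ite_eq]

lemma ptrSnd_apply (M : Matrix (A × B) (A × B) ℂ) (a a' : A) :
    ptrSnd M a a' = ∑ b : B, M (a, b) (a', b) := by
  simp only [ptrSnd, LinearMap.sum_apply, Matrix.sum_apply, krausMap_apply, Matrix.mul_apply,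
    Matrix.conjTranspose_apply, Matrix.of_apply, ite_mul, one_mul, zero_mul,
    Finset.sum_ite_eq', Finset.mem_univ, if_true]
  simp [apply_ite (star : ℂ → ℂ), mul_ite, Finset.sum_ite_eq', Finset.sum_ite_eq]

lemma blockExtract_apply (w : W) (M : Matrix (W × B) (W × B) ℂ) (b b' : B) :
    blockExtract w M b b' = M (w, b) (w, b') := by
  simp only [blockExtract, krausMap_apply, Matrix.mul_apply,
    Matrix.conjTranspose_apply, Matrix.of_apply, ite_mul, one_mul, zero_mul,
    Finset.sum_ite_eq', Finset.mem_univ, if_true]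
  simp [apply_ite (star : ℂ → ℂ), mul_ite, Finset.sum_ite_eq', Finset.sum_ite_eq]

lemma trace_ptrFst (M : Matrix (A × B) (A × B) ℂ) :
    Matrix.trace (ptrFst M) = Matrix.trace M := by
  simp only [Matrix.trace, Matrix.diag, ptrFst_apply, Fintype.sum_prod_type]
  exact Finset.sum_comm

lemma trace_ptrSnd (M : Matrix (A × B) (A × B) ℂ) :
    Matrix.trace (ptrSnd M) = Matrix.trace M := by
  simp [Matrix.trace, Matrix.diag, ptrSnd_apply, Fintype.sum_prod_type]

lemma isCPMap_ptrFst : IsCPMap (ptrFst (A := A) (B := B)) :=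
  isCPMap_sum _ _ fun _ _ => isCPMap_krausMap _

lemma isCPMap_ptrSnd : IsCPMap (ptrSnd (A := A) (B := B)) :=
  isCPMap_sum _ _ fun _ _ => isCPMap_krausMap _

lemma isCPMap_blockExtract (w : W) : IsCPMap (blockExtract (B := B) w) :=
  isCPMap_krausMap _

end PtrMaps

section Spectral

lemma aux_complete {A : Type*} [Fintype A] [DecidableEq A] (u : A → (A → ℂ))
    (honb : ∀ x y, dotProduct (star (u x)) (u y) = if x = y then 1 else 0) :
    ∀ a c, (∑ x, u x a * star (u x c)) = if a = c then 1 else 0 := by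
  classical
  set U : Matrix A A ℂ := Matrix.of fun a x => u x a with hU
  have h1 : Uᴴ * U = 1 := by
    ext x y
    have := honb x y
    simp only [dotProduct, Pi.star_apply] at this
    simpa [Matrix.mul_apply, Matrix.one_apply, hU] using this
  have h2 : U * Uᴴ = 1 := mul_eq_one_comm.mp h1
  intro a c
  have := congrFun (congrFun (congrArg (fun M => (M : Matrix A A ℂ)) h2) a) c
  simpa [Matrix.mul_apply, Matrix.one_apply, hU] using this

lemma aux_decomp {A : Type*} [Fintype A] [DecidableEq A] (u : A → (A → ℂ))
    (hcompl : ∀ a c, (∑ x, u x a * star (u x c)) = if a = c then 1 else 0)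
    (ρ : Matrix A A ℂ) (d : A → ℂ) (heig : ∀ x, ρ *ᵥ u x = d x • u x) :
    ρ = ∑ x, d x • Matrix.vecMulVec (u x) (star (u x)) := by
  ext a c
  have step1 : ρ a c = ∑ c', ρ a c' * (∑ x, u x c' * star (u x c)) := by
    simp only [hcompl, mul_ite, mul_one, mul_zero, Finset.sum_ite_eq', Finset.mem_univ, if_true]
  rw [step1]
  simp only [Finset.mul_sum]
  rw [Finset.sum_comm]
  have step2 : ∀ x, (∑ c', ρ a c' * (u x c' * star (u x c)))
      = d x * (u x a * star (u x c)) := by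
    intro x
    have h3 : (ρ *ᵥ u x) a = d x * u x a := by rw [heig]; simp
    calc ∑ c', ρ a c' * (u x c' * star (u x c))
        = (∑ c', ρ a c' * u x c') * star (u x c) := by
          rw [Finset.sum_mul]; exact Finset.sum_congr rfl fun _ _ => by ring
      _ = d x * u x a * star (u x c) := by rw [← h3]; rfl
      _ = d x * (u x a * star (u x c)) := by ring
  simp only [step2]
  simp [Matrix.sum_apply, Matrix.vecMulVec_apply]

lemma aux_vecMulVec_psd {A : Type*} [Fintype A] (v : A → ℂ) :
    (Matrix.vecMulVec v (star v)).PosSemidef := by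
  have h : Matrix.vecMulVec v (star v)
      = (Matrix.of fun (_ : Unit) a => star (v a))ᴴ *
        (Matrix.of fun (_ : Unit) a => star (v a)) := by
    ext a c
    simp [Matrix.mul_apply, Matrix.vecMulVec_apply, Matrix.conjTranspose_apply]
  rw [h]
  exact Matrix.posSemidef_conjTranspose_mul_self _

lemma simult_diag {S A : Type*} [Fintype S] [Fintype A] [DecidableEq A]
    (ρ : S → Matrix A A ℂ) (hherm : ∀ s, (ρ s).IsHermitian)
    (hcomm : ∀ s s', Commute (ρ s) (ρ s')) :
    ∃ (u : A → (A → ℂ)) (d : S → A → ℂ),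
      (∀ x y, dotProduct (star (u x)) (u y) = if x = y then 1 else 0) ∧
      (∀ s x, (ρ s) *ᵥ u x = d s x • u x) := by
  classical
  set T : S → Module.End ℂ (EuclideanSpace ℂ A) := fun s => Matrix.toEuclideanLin (ρ s) with hT
  have hsym : ∀ s, (T s).IsSymmetric := fun s => (Matrix.isHermitian_iff_isSymmetric).mp (hherm s)
  have hmul : ∀ s s', T s * T s' = Matrix.toEuclideanLin (ρ s * ρ s') := by
    intro s s'
    apply LinearMap.ext; intro v
    simp only [hT, Module.End.mul_apply, Matrix.toEuclideanLin_apply]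
    simp [Matrix.mulVec_mulVec]
  have hcom : Pairwise (Function.onFun Commute T) := by
    intro s s' _
    show T s * T s' = T s' * T s
    rw [hmul, hmul, hcomm s s']
  have hO := LinearMap.IsSymmetric.orthogonalFamily_iInf_eigenspaces hsym
  have hD :=
    LinearMap.IsSymmetric.LinearMap.IsSymmetric.directSum_isInternal_of_pairwise_commute
      hsym hcom
  set V : (S → ℂ) → Submodule ℂ (EuclideanSpace ℂ A) :=
    fun χ => ⨅ j, Module.End.eigenspace (T j) (χ j) with hV
  set bas : Module.Basis (Σ χ : S → ℂ, Fin (Module.finrank ℂ (V χ))) ℂ (EuclideanSpace ℂ A) :=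
    hD.collectedBasis (fun χ => (stdOrthonormalBasis ℂ (V χ)).toBasis) with hbas
  have horth : Orthonormal ℂ bas :=
    hD.collectedBasis_orthonormal hO (fun χ => by simp)
  haveI : Fintype (Σ χ : S → ℂ, Fin (Module.finrank ℂ (V χ))) :=
    FiniteDimensional.fintypeBasisIndex bas
  have hcard : Fintype.card A = Fintype.card (Σ χ : S → ℂ, Fin (Module.finrank ℂ (V χ))) := by
    rw [← Module.finrank_eq_card_basis bas, finrank_euclideanSpace]
  set e : A ≃ (Σ χ : S → ℂ, Fin (Module.finrank ℂ (V χ))) := Fintype.equivOfCardEq hcard with he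
  refine ⟨fun x => WithLp.equiv 2 (A → ℂ) (bas (e x)),
    fun s x => (e x).1 s, ?_, ?_⟩
  · intro x y
    rw [orthonormal_iff_ite] at horth
    have h2 := horth (e x) (e y)
    simp only [EmbeddingLike.apply_eq_iff_eq] at h2
    refine Eq.trans ?_ h2
    simp [PiLp.inner_apply, dotProduct, RCLike.inner_apply, mul_comm]
  · intro s x
    have hmem : bas (e x) ∈ V (e x).1 := hD.collectedBasis_mem _ _
    have hmem2 := (Submodule.mem_iInf _).mp hmem s
    rw [Module.End.mem_eigenspace_iff] at hmem2
    have h3 := congrArg (WithLp.equiv 2 (A → ℂ)) hmem2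
    rw [hT] at h3
    simpa [Matrix.ofLp_toEuclideanLin_apply, Matrix.toLin'_apply] using h3

end Spectral

section N'Construction

lemma aux_kraus_rank_one {A D : Type*} [Fintype A] [Fintype D] (v : D → ℂ) (uu : A → ℂ)
    (M : Matrix A A ℂ) :
    (Matrix.of (fun p a => v p * star (uu a)) * M * (Matrix.of (fun p a => v p * star (uu a)))ᴴ)
      = dotProduct (star uu) (M *ᵥ uu) • Matrix.vecMulVec v (star v) := by
  ext p q
  simp only [Matrix.mul_apply, Matrix.conjTranspose_apply, Matrix.of_apply,
    Matrix.vecMulVec_apply, Matrix.smul_apply, smul_eq_mul, dotProduct, Matrix.mulVec,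
    Pi.star_apply, star_mul', star_star, Finset.sum_mul, Finset.mul_sum]
  rw [Finset.sum_comm]
  refine Finset.sum_congr rfl fun a _ => Finset.sum_congr rfl fun c _ => by ring

/-- The enhanced instrument: measure in the basis `u`, keep the outcome in the first
tensor factor, and prepare the corresponding output of `N w` in the second factor.
`C x` is a square root of `N w` applied to the `x`-th basis projection. -/
noncomputable def auxN'map {A B : Type*} [Fintype A] [Fintype B]
    (u : A → (A → ℂ)) (C : A → Matrix B B ℂ) :
    Matrix A A ℂ →ₗ[ℂ] Matrix (A × B) (A × B) ℂ :=
  ∑ xr : A × B, krausMap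
    (Matrix.of fun (p : A × B) (a : A) =>
      (u xr.1 p.1 * star (C xr.1 xr.2 p.2)) * star (u xr.1 a))

lemma isCPMap_auxN'map {A B : Type*} [Fintype A] [Fintype B] [DecidableEq A]
    (u : A → (A → ℂ)) (C : A → Matrix B B ℂ) : IsCPMap (auxN'map u C) :=
  isCPMap_sum _ _ fun _ _ => isCPMap_krausMap _

lemma auxN'map_apply {A B : Type*} [Fintype A] [Fintype B]
    (u : A → (A → ℂ)) (C : A → Matrix B B ℂ) (M : Matrix A A ℂ) (p q : A × B) :
    auxN'map u C M p q = ∑ x : A, dotProduct (star (u x)) (M *ᵥ u x) *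
      (u x p.1 * star (u x q.1) * ((C x)ᴴ * (C x)) p.2 q.2) := by
  have h1 : ∀ xr : A × B,
      krausMap (Matrix.of fun (p : A × B) (a : A) =>
        (u xr.1 p.1 * star (C xr.1 xr.2 p.2)) * star (u xr.1 a)) M
      = dotProduct (star (u xr.1)) (M *ᵥ u xr.1) •
        Matrix.vecMulVec (fun p : A × B => u xr.1 p.1 * star (C xr.1 xr.2 p.2))
          (star fun p : A × B => u xr.1 p.1 * star (C xr.1 xr.2 p.2)) := fun xr => by
    rw [krausMap_apply]
    exact aux_kraus_rank_one _ _ M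
  simp only [auxN'map, LinearMap.sum_apply, Matrix.sum_apply, h1, Matrix.smul_apply,
    Matrix.vecMulVec_apply, smul_eq_mul, Pi.star_apply, star_mul', star_star]
  rw [Fintype.sum_prod_type]
  refine Finset.sum_congr rfl fun x _ => ?_
  simp only [Matrix.mul_apply, Matrix.conjTranspose_apply, Finset.mul_sum]
  exact Finset.sum_congr rfl fun r _ => by ring

end N'Construction

open scoped MatrixOrder in
lemma aux_psd_eq_conjTranspose_mul_self {B : Type*} [Fintype B] [DecidableEq B]
    (A : Matrix B B ℂ) (h : A.PosSemidef) : ∃ C : Matrix B B ℂ, A = Cᴴ * C := by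
  have h0 : 0 ≤ A := Matrix.nonneg_iff_posSemidef.mpr h
  refine ⟨CFC.sqrt A, ?_⟩
  rw [← Matrix.star_eq_conjTranspose, (CFC.sqrt_nonneg A).isSelfAdjoint.star_eq,
    CFC.sqrt_mul_sqrt_self A h0]

/-- In the classical (commuting) setting, a learning algorithm `N` acting
on commuting input states `{ρ_s}` that does not admit a reconstruction map
`Γ ∘ N(ρ_s) = ρ_s` is not information-theoretically admissible: there exists a (strictly)
more informative algorithm `N'` — more informative than `N`, while `N` is not more
informative than `N'`. -/
theorem classical_no_reconstruction_not_ITA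
    {S W A B : Type*} [Fintype S] [Fintype W] [DecidableEq W]
    [Fintype A] [DecidableEq A] [Fintype B] [DecidableEq B]
    (ρ : S → Matrix A A ℂ) (hρ : ∀ s, IsDensity (ρ s))
    (hcomm : ∀ s s', Commute (ρ s) (ρ s'))
    (N : W → (Matrix A A ℂ →ₗ[ℂ] Matrix B B ℂ))
    (hCP : ∀ w, IsCPMap (N w))
    (hTP : ∀ M : Matrix A A ℂ, ∑ w, Matrix.trace (N w M) = Matrix.trace M)
    (hno : ¬ ∃ Γ : Matrix (W × B) (W × B) ℂ →ₗ[ℂ] Matrix A A ℂ,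
      IsCPMap Γ ∧ IsTPMap Γ ∧ ∀ s, Γ (cqOut N (ρ s)) = ρ s) :
    ∃ N' : W → (Matrix A A ℂ →ₗ[ℂ] Matrix (A × B) (A × B) ℂ),
      (∀ w, IsCPMap (N' w)) ∧
      (∀ M : Matrix A A ℂ, ∑ w, Matrix.trace (N' w M) = Matrix.trace M) ∧
      MoreInformative ρ N' N ∧ ¬ MoreInformative ρ N N' := by
  classical
  obtain ⟨u, d, honb, heig⟩ := simult_diag ρ (fun s => (hρ s).1.1) hcomm
  have hcompl := aux_complete u honb
  have hdecomp : ∀ s, ρ s = ∑ x, d s x • Matrix.vecMulVec (u x) (star (u x)) :=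
    fun s => aux_decomp u hcompl (ρ s) (d s) (heig s)
  have hval : ∀ s x, dotProduct (star (u x)) (ρ s *ᵥ u x) = d s x := by
    intro s x
    rw [heig s x, dotProduct_smul, honb x x]
    simp
  have hnorm : ∀ x, (∑ a, u x a * star (u x a)) = 1 := by
    intro x
    have h := honb x x
    simp only [dotProduct, Pi.star_apply, if_pos rfl, eq_self_iff_true, if_true] at h
    rw [← h]
    exact Finset.sum_congr rfl fun a _ => mul_comm _ _
  have htruu : ∀ x, Matrix.trace (Matrix.vecMulVec (u x) (star (u x))) = 1 := by
    intro x
    simpa [Matrix.trace, Matrix.diag, Matrix.vecMulVec_apply] using hnorm x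
  have hpsdN : ∀ w x, (N w (Matrix.vecMulVec (u x) (star (u x)))).PosSemidef :=
    fun w x => isCPMap_apply_posSemidef (hCP w) (aux_vecMulVec_psd (u x))
  choose C hC using fun w x => aux_psd_eq_conjTranspose_mul_self _ (hpsdN w x)
  -- the enhanced algorithm
  set N' : W → (Matrix A A ℂ →ₗ[ℂ] Matrix (A × B) (A × B) ℂ) :=
    fun w => auxN'map u (C w) with hN'def
  have hN'app : ∀ w M (p q : A × B), N' w M p q
      = ∑ x : A, dotProduct (star (u x)) (M *ᵥ u x) *
          (u x p.1 * star (u x q.1) *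
            (N w (Matrix.vecMulVec (u x) (star (u x)))) p.2 q.2) := by
    intro w M p q
    rw [hN'def]
    rw [auxN'map_apply]
    exact Finset.sum_congr rfl fun x _ => by rw [← hC w x]
  -- decomposition of N w (ρ s)
  have hNapp : ∀ w s, N w (ρ s)
      = ∑ x, d s x • N w (Matrix.vecMulVec (u x) (star (u x))) := by
    intro w s
    conv_lhs => rw [hdecomp s]
    rw [map_sum]
    simp only [LinearMap.map_smul]
  -- trace of N' w M
  have htrN' : ∀ w M, Matrix.trace (N' w M)
      = ∑ x, dotProduct (star (u x)) (M *ᵥ u x) *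
          Matrix.trace (N w (Matrix.vecMulVec (u x) (star (u x)))) := by
    intro w M
    simp only [Matrix.trace, Matrix.diag, hN'app]
    rw [Finset.sum_comm]
    refine Finset.sum_congr rfl fun x _ => ?_
    rw [Fintype.sum_prod_type]
    calc ∑ a, ∑ b, dotProduct (star (u x)) (M *ᵥ u x) *
          (u x a * star (u x a) * (N w (Matrix.vecMulVec (u x) (star (u x)))) b b)
        = (∑ a, u x a * star (u x a)) * (dotProduct (star (u x)) (M *ᵥ u x) *
            ∑ b, (N w (Matrix.vecMulVec (u x) (star (u x)))) b b) := by
          rw [Finset.sum_mul]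
          refine Finset.sum_congr rfl fun a _ => ?_
          rw [Finset.mul_sum, Finset.mul_sum]
          exact Finset.sum_congr rfl fun b _ => by ring
      _ = dotProduct (star (u x)) (M *ᵥ u x) *
            ∑ b, (N w (Matrix.vecMulVec (u x) (star (u x)))) b b := by
          rw [hnorm x, one_mul]
  -- ∑_x ⟨u x, M u x⟩ = trace M
  have hsumc : ∀ M : Matrix A A ℂ,
      (∑ x, dotProduct (star (u x)) (M *ᵥ u x)) = Matrix.trace M := by
    intro M
    have hx : ∀ x, dotProduct (star (u x)) (M *ᵥ u x)
        = ∑ a, ∑ c, M a c * (u x c * star (u x a)) := by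
      intro x
      simp only [dotProduct, Matrix.mulVec, Pi.star_apply, Finset.mul_sum]
      exact Finset.sum_congr rfl fun a _ => Finset.sum_congr rfl fun c _ => by ring
    simp only [hx]
    rw [Finset.sum_comm]
    have hy : ∀ a, (∑ x, ∑ c, M a c * (u x c * star (u x a))) = M a a := by
      intro a
      rw [Finset.sum_comm]
      have : ∀ c, (∑ x, M a c * (u x c * star (u x a))) = M a c * ∑ x, u x c * star (u x a) := by
        intro c; rw [Finset.mul_sum]
      simp only [this, hcompl, mul_ite, mul_one, mul_zero, Finset.sum_ite_eq',
        Finset.mem_univ, if_true]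
    simp only [hy, Matrix.trace, Matrix.diag]
  -- simulation of N from N' by partial trace
  have hsim1 : ∀ s w, ptrFst (N' w (ρ s)) = N w (ρ s) := by
    intro s w
    ext b b'
    rw [ptrFst_apply, hNapp w s]
    simp only [hN'app, Matrix.sum_apply, Matrix.smul_apply, smul_eq_mul, hval]
    rw [Finset.sum_comm]
    refine Finset.sum_congr rfl fun x _ => ?_
    calc ∑ a, d s x * (u x a * star (u x a) *
          (N w (Matrix.vecMulVec (u x) (star (u x)))) b b')
        = (∑ a, u x a * star (u x a)) *
            (d s x * (N w (Matrix.vecMulVec (u x) (star (u x)))) b b') := by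
          rw [Finset.sum_mul]
          exact Finset.sum_congr rfl fun a _ => by ring
      _ = d s x * (N w (Matrix.vecMulVec (u x) (star (u x)))) b b' := by
          rw [hnorm x, one_mul]
  refine ⟨N', fun w => isCPMap_auxN'map u (C w), ?_, ?_, ?_⟩
  · -- trace preservation of the family N'
    intro M
    simp only [htrN']
    rw [Finset.sum_comm]
    have hxx : ∀ x, (∑ w, dotProduct (star (u x)) (M *ᵥ u x) *
        Matrix.trace (N w (Matrix.vecMulVec (u x) (star (u x)))))
        = dotProduct (star (u x)) (M *ᵥ u x) := by
      intro x
      rw [← Finset.mul_sum, hTP, htruu, mul_one]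
    simp only [hxx]
    exact hsumc M
  · -- N' is more informative than N
    refine ⟨fun _ => ptrFst, fun w => ⟨isCPMap_ptrFst, trace_ptrFst⟩, fun s w => hsim1 s w⟩
  · -- N is not more informative than N'
    rintro ⟨Γ', hΓ'cptp, hsim'⟩
    apply hno
    refine ⟨∑ w, ptrSnd ∘ₗ (Γ' w) ∘ₗ blockExtract w, ?_, ?_, ?_⟩
    · exact isCPMap_sum _ _ fun w _ =>
        isCPMap_comp isCPMap_ptrSnd (isCPMap_comp (hΓ'cptp w).1 (isCPMap_blockExtract w))
    · intro X
      rw [LinearMap.sum_apply, Matrix.trace_sum]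
      have h1 : ∀ w, Matrix.trace ((ptrSnd ∘ₗ (Γ' w) ∘ₗ blockExtract w) X)
          = Matrix.trace (blockExtract w X) := by
        intro w
        simp only [LinearMap.comp_apply]
        rw [trace_ptrSnd]
        exact (hΓ'cptp w).2 _
      simp only [h1]
      simp only [Matrix.trace, Matrix.diag, blockExtract_apply, Fintype.sum_prod_type]
    · intro s
      have hblock : ∀ w, blockExtract w (cqOut N (ρ s)) = N w (ρ s) := by
        intro w
        ext b b'
        simp [blockExtract_apply, cqOut]
      rw [LinearMap.sum_apply]
      simp only [LinearMap.comp_apply, hblock, hsim' s]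
      -- goal : ∑ w, ptrSnd (N' w (ρ s)) = ρ s
      ext a a'
      simp only [Matrix.sum_apply, ptrSnd_apply, hN'app, hval]
      have hstep : ∀ w, (∑ b : B, ∑ x : A, d s x *
          (u x a * star (u x a') * (N w (Matrix.vecMulVec (u x) (star (u x)))) b b))
          = ∑ x : A, d s x * (u x a * star (u x a')) *
              Matrix.trace (N w (Matrix.vecMulVec (u x) (star (u x)))) := by
        intro w
        rw [Finset.sum_comm]
        refine Finset.sum_congr rfl fun x _ => ?_
        simp only [Matrix.trace, Matrix.diag, Finset.mul_sum]
        exact Finset.sum_congr rfl fun b _ => by ring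
      simp only [hstep]
      rw [Finset.sum_comm]
      have hfin : ∀ x, (∑ w, d s x * (u x a * star (u x a')) *
          Matrix.trace (N w (Matrix.vecMulVec (u x) (star (u x)))))
          = d s x * (u x a * star (u x a')) := by
        intro x
        rw [← Finset.mul_sum, hTP, htruu, mul_one]
      simp only [hfin]
      conv_rhs => rw [hdecomp s]
      simp [Matrix.sum_apply, Matrix.vecMulVec_apply, mul_assoc]
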